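/- Let n ≥ 1, let c₀ ∈ (0,1), and let (A_k)_{k ≥ k₁} be a sequence of nonnegative reals and (a_k) positive reals such that for all k ≥ k₁: A_{k+1} ≤ A_k − c₀·a_k·A_k^{(n−1)/n}, A_k ≥ a_k^n implies this recursion applies, and suppose A_{k₁+1} ≤ (1/nⁿ)(1 − c₀ a_{k₁})ⁿ. If additionally A_k ≥ a_kⁿ for all k in the range, then for every k > k₁: A_k ≤ (1/nⁿ)·(1 − c₀·∑_{j=k₁}^{k−1} a_j)ⁿ. -/

import Mathlib

/-!
Write `A_k = s^n` with `s = A_k^{1/n} ≥ a_k`, so that the recursion reads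
`A_{k+1} ≤ s^{n-1} (s - b)` with `b = c₀ a_k ≤ s`. The induction hypothesis says `s^n ≤ u^n` for
`u = (1 - c₀ ∑_{j<k} a_j)/n`. If `u > 0` then `s ≤ u`, and as `s ↦ s^{n-1} (s - b)` is monotone on
`[b, ∞)`, the right-hand side is at most `u^n - n (b/n) u^{n-1}`, which
Bernoulli's inequality bounds by `(u - b/n)^n`, the claimed bound for `k + 1`. When `u ≤ 0` (possible
only for even `n`) the bound instead follows from `A_{k+1} ≤ A_k` and monotonicity of `|·|^n`.
-/

theorem pow_sub_mul_pow_pred_le_sub_pow {x y : ℝ} (hx : 0 < x) (hy : y ≤ 2 * x) (n : ℕ) :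
    x ^ n - n * y * x ^ (n - 1) ≤ (x - y) ^ n := by
  have bernoulli := one_add_mul_le_pow (a := -(y / x))
    (by rw [neg_le_neg_iff, div_le_iff₀ hx]; linarith) n
  obtain _ | m := n
  · simp
  calc x ^ (m + 1) - ↑(m + 1) * y * x ^ (m + 1 - 1)
      = x ^ (m + 1) * (1 + ↑(m + 1) * -(y / x)) := by
        rw [Nat.add_sub_cancel]; field_simp; ring
    _ ≤ x ^ (m + 1) * (1 + -(y / x)) ^ (m + 1) := by gcongr
    _ = (x - y) ^ (m + 1) := by rw [← mul_pow]; field_simp; ring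

theorem pow_pred_mul_sub_le_sub_div_pow {n : ℕ} (hn : n ≠ 0) {s b u : ℝ} (hs : 0 < s)
    (hb : 0 ≤ b) (hbs : b ≤ s) (hsu : s ^ n ≤ u ^ n) :
    s ^ (n - 1) * (s - b) ≤ (u - b / n) ^ n := by
  have hn₀ : (0 : ℝ) < n := by positivity
  have hbn : 0 ≤ b / n := div_nonneg hb hn₀.le
  rcases lt_or_ge 0 u with hu | hu
  · have hle : s ≤ u := (pow_le_pow_iff_left₀ hs.le hu.le hn).1 hsu
    calc s ^ (n - 1) * (s - b) ≤ u ^ (n - 1) * (u - b) := by gcongr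
      _ = u ^ n - n * (b / n) * u ^ (n - 1) := by
        rw [mul_div_cancel₀ _ hn₀.ne']
        obtain ⟨m, rfl⟩ := Nat.exists_eq_succ_of_ne_zero hn
        simp only [Nat.succ_sub_one, pow_succ]; ring
      _ ≤ (u - b / n) ^ n := by
        refine pow_sub_mul_pow_pred_le_sub_pow hu ?_ n
        calc b / n ≤ b := div_le_self hb (by exact_mod_cast Nat.one_le_iff_ne_zero.2 hn)
          _ ≤ 2 * u := by linarith
  · have hn_even : Even n := by
      by_contra hodd
      have := (Nat.not_even_iff_odd.1 hodd).pow_nonpos hu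
      linarith [pow_pos hs n]
    calc s ^ (n - 1) * (s - b) ≤ s ^ (n - 1) * s := by gcongr; linarith
      _ = s ^ n := by rw [← pow_succ, Nat.sub_add_cancel (Nat.one_le_iff_ne_zero.2 hn)]
      _ ≤ u ^ n := hsu
      _ ≤ (u - b / n) ^ n := by
        rw [← hn_even.pow_abs u, ← hn_even.pow_abs (u - b / n)]
        refine pow_le_pow_left₀ (abs_nonneg u) ?_ n
        rw [abs_of_nonpos hu, abs_of_nonpos (by linarith)]
        linarith

theorem rpow_sub_one_div_eq_rpow_inv_pow {x : ℝ} (hx : 0 ≤ x) {n : ℕ} (hn : n ≠ 0) :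
    x ^ (((n : ℝ) - 1) / n) = (x ^ ((n : ℝ)⁻¹)) ^ (n - 1) := by
  rw [← Real.rpow_natCast, ← Real.rpow_mul hx, Nat.cast_pred (Nat.pos_of_ne_zero hn),
    div_eq_mul_inv, mul_comm]

theorem le_one_div_pow_mul_sub_pow_of_rec {n : ℕ} (hn : n ≠ 0) {c a A A' v : ℝ} (hc₀ : 0 ≤ c)
    (hc₁ : c ≤ 1) (ha : 0 < a) (hlow : a ^ n ≤ A)
    (hrec : A' ≤ A - c * a * A ^ (((n : ℝ) - 1) / n)) (hA : A ≤ 1 / (n : ℝ) ^ n * v ^ n) :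
    A' ≤ 1 / (n : ℝ) ^ n * (v - c * a) ^ n := by
  have hA₀ : 0 ≤ A := (pow_pos ha n).le.trans hlow
  set s := A ^ ((n : ℝ)⁻¹)
  have hsA : s ^ n = A := Real.rpow_inv_natCast_pow hA₀ hn
  have has : a ≤ s := (pow_le_pow_iff_left₀ ha.le (by positivity) hn).1 (hsA ▸ hlow)
  have hsv : s ^ n ≤ (v / n) ^ n := by rw [hsA, div_pow]; simpa [div_eq_inv_mul] using hA
  have hpow : A ^ (((n : ℝ) - 1) / n) = s ^ (n - 1) := rpow_sub_one_div_eq_rpow_inv_pow hA₀ hn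
  rw [hpow, ← hsA] at hrec
  calc A' ≤ s ^ (n - 1) * (s - c * a) := by
        rwa [mul_sub, ← pow_succ, Nat.sub_add_cancel (Nat.one_le_iff_ne_zero.2 hn),
          mul_comm (s ^ (n - 1))]
    _ ≤ (v / n - c * a / n) ^ n :=
        pow_pred_mul_sub_le_sub_div_pow hn (ha.trans_le has) (mul_nonneg hc₀ ha.le)
          ((mul_le_of_le_one_left ha.le hc₁).trans has) hsv
    _ = 1 / (n : ℝ) ^ n * (v - c * a) ^ n := by rw [← sub_div, div_pow, one_div_mul_eq_div]

theorem stmt_8_general (n : ℕ) (hn : 1 ≤ n) (c₀ : ℝ) (hc₀ : c₀ ∈ Set.Ioo (0 : ℝ) 1)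
    (k₁ : ℕ) (A a : ℕ → ℝ)
    (ha : ∀ k ≥ k₁, 0 < a k)
    (hrec : ∀ k ≥ k₁, A (k + 1) ≤ A k - c₀ * a k * (A k) ^ (((n : ℝ) - 1) / n))
    (hbase : A (k₁ + 1) ≤ (1 / (n : ℝ) ^ n) * (1 - c₀ * a k₁) ^ n)
    (hlow : ∀ k ≥ k₁, (a k) ^ n ≤ A k) :
    ∀ k > k₁, A k ≤ (1 / (n : ℝ) ^ n) * (1 - c₀ * ∑ j ∈ Finset.Ico k₁ k, a j) ^ n := by
  intro k hk
  induction k, hk using Nat.le_induction with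
  | base => simpa using hbase
  | succ k hk ih =>
    have hk₁ : k₁ ≤ k := by omega
    rw [Finset.sum_Ico_succ_top hk₁, mul_add, ← sub_sub]
    exact le_one_div_pow_mul_sub_pow_of_rec (by omega) hc₀.1.le hc₀.2.le (ha k hk₁)
      (hlow k hk₁) (hrec k hk₁) ih

theorem stmt_8 (n : ℕ) (hn : 1 ≤ n) (c₀ : ℝ) (hc₀ : c₀ ∈ Set.Ioo (0 : ℝ) 1)
    (k₁ : ℕ) (A a : ℕ → ℝ)
    (hA : ∀ k ≥ k₁, 0 ≤ A k)
    (ha : ∀ k ≥ k₁, 0 < a k)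
    (hrec : ∀ k ≥ k₁, A (k + 1) ≤ A k - c₀ * a k * (A k) ^ (((n : ℝ) - 1) / n))
    (hbase : A (k₁ + 1) ≤ (1 / (n : ℝ) ^ n) * (1 - c₀ * a k₁) ^ n)
    (hlow : ∀ k ≥ k₁, (a k) ^ n ≤ A k) :
    ∀ k > k₁, A k ≤ (1 / (n : ℝ) ^ n) * (1 - c₀ * ∑ j ∈ Finset.Ico k₁ k, a j) ^ n :=
  stmt_8_general n hn c₀ hc₀ k₁ A a ha hrec hbase hlow
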